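/- arXiv:1202.2092 — 7 statements merged into one kernel-verified Lean document; each statement's English description precedes it below -/
import Mathlib

section
/- Let G be a connected finite simple graph on n vertices with minimum degree δ. Then for every vertex u of G, the union N¹(u) ∪ N²(u) ∪ N³(u) ∪ N⁴(u) has cardinality at least min(2δ, n−1). -/
open SimpleGraph

private lemma aux_walk {V : Type} [Fintype V] [DecidableEq V] {G : SimpleGraph V}
    (hconn : G.Connected) :
    ∀ {u v : V} (p : G.Walk u v) (k : ℕ), k ≤ p.length →
      ∃ x, G.dist u x ≤ k ∧ G.dist x v ≤ p.length - k := by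
  intro u v p
  induction p with
  | @nil w =>
    intro k hk
    obtain rfl := Nat.le_zero.mp hk
    exact ⟨w, by simp, by simp⟩
  | @cons a b c h q ih =>
    intro k hk
    match k with
    | 0 => exact ⟨a, by simp, by simpa using SimpleGraph.dist_le (SimpleGraph.Walk.cons h q)⟩
    | k + 1 =>
      obtain ⟨x, hx1, hx2⟩ := ih k (by simpa using hk)
      refine ⟨x, ?_, by simpa using hx2⟩
      calc G.dist a x ≤ G.dist a b + G.dist b x := hconn.dist_triangle
        _ ≤ 1 + k := by
            have : G.dist a b = 1 := SimpleGraph.dist_eq_one_iff_adj.mpr h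
            omega
        _ = k + 1 := by omega

private lemma exists_graph_dist_eq {V : Type} [Fintype V] [DecidableEq V] {G : SimpleGraph V}
    (hconn : G.Connected) {u v : V} {k : ℕ} (h : k ≤ G.dist u v) :
    ∃ x, G.dist u x = k := by
  obtain ⟨p, hp⟩ := hconn.exists_walk_length_eq_dist u v
  obtain ⟨x, hx1, hx2⟩ := aux_walk hconn p k (by omega)
  refine ⟨x, le_antisymm hx1 ?_⟩
  have htri : G.dist u v ≤ G.dist u x + G.dist x v := hconn.dist_triangle
  omega

/-- Let `G` be a connected finite simple graph on `n` vertices with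
minimum degree `δ`.  Then for every vertex `u` of `G`, the union
`N¹(u) ∪ N²(u) ∪ N³(u) ∪ N⁴(u)` of the sets of vertices at graph distance exactly
`1`, `2`, `3`, `4` from `u` has cardinality at least `min (2δ) (n − 1)`. -/
theorem minDegree_le_card_ball_four
    {V : Type} [Fintype V] [DecidableEq V] (G : SimpleGraph V) [DecidableRel G.Adj]
    (n : ℕ) (hn : Fintype.card V = n) (hconn : G.Connected) (u : V) :
    min (2 * G.minDegree) (n - 1) ≤
      (Finset.univ.filter (fun v => 1 ≤ G.dist u v ∧ G.dist u v ≤ 4)).card := by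
  by_cases hbig : ∃ v, 5 ≤ G.dist u v
  · obtain ⟨v, hv⟩ := hbig
    obtain ⟨x, hx⟩ := exists_graph_dist_eq hconn (show 3 ≤ G.dist u v by omega)
    have hsub : G.neighborFinset u ∪ G.neighborFinset x ⊆
        Finset.univ.filter (fun v => 1 ≤ G.dist u v ∧ G.dist u v ≤ 4) := by
      intro y hy
      simp only [Finset.mem_union, SimpleGraph.mem_neighborFinset] at hy
      simp only [Finset.mem_filter, Finset.mem_univ, true_and]
      rcases hy with hy | hy
      · have : G.dist u y = 1 := SimpleGraph.dist_eq_one_iff_adj.mpr hy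
        omega
      · have h1 : G.dist x y = 1 := SimpleGraph.dist_eq_one_iff_adj.mpr hy
        have h2 : G.dist u y ≤ G.dist u x + G.dist x y := hconn.dist_triangle
        have h3 : G.dist u x ≤ G.dist u y + G.dist y x := hconn.dist_triangle
        have h4 : G.dist y x = 1 := SimpleGraph.dist_eq_one_iff_adj.mpr hy.symm
        omega
    have hdisj : Disjoint (G.neighborFinset u) (G.neighborFinset x) := by
      rw [Finset.disjoint_left]
      intro y hy1 hy2
      simp only [SimpleGraph.mem_neighborFinset] at hy1 hy2
      have h1 : G.dist u y = 1 := SimpleGraph.dist_eq_one_iff_adj.mpr hy1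
      have h2 : G.dist y x = 1 := SimpleGraph.dist_eq_one_iff_adj.mpr hy2.symm
      have h3 : G.dist u x ≤ G.dist u y + G.dist y x := hconn.dist_triangle
      omega
    have hcard := Finset.card_le_card hsub
    rw [Finset.card_union_of_disjoint hdisj] at hcard
    have hdu : G.minDegree ≤ G.degree u := G.minDegree_le_degree u
    have hdx : G.minDegree ≤ G.degree x := G.minDegree_le_degree x
    simp only [SimpleGraph.card_neighborFinset_eq_degree] at hcard
    omega
  · push_neg at hbig
    have hsub : Finset.univ.erase u ⊆
        Finset.univ.filter (fun v => 1 ≤ G.dist u v ∧ G.dist u v ≤ 4) := by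
      intro y hy
      have hne : y ≠ u := Finset.ne_of_mem_erase hy
      simp only [Finset.mem_filter, Finset.mem_univ, true_and]
      have : G.dist u y ≠ 0 :=
        SimpleGraph.dist_ne_zero_iff_ne_and_reachable.mpr ⟨hne.symm, hconn u y⟩
      have := hbig y
      omega
    have hcard := Finset.card_le_card hsub
    rw [Finset.card_erase_of_mem (Finset.mem_univ u), Finset.card_univ, hn] at hcard
    omega
end

section
/- Let G be a finite simple graph on n vertices, let δ₀ > 0 be a real number, and let u be a vertex with δ₀ ≤ d(u) < (1 + 1/4)·δ₀. Let w be a neighbor of u such that d(w, N²(u)) ≥ δ₀/2. Then d(w, N²(u)) / d(w)² ≥ 2/(7n). (This quantity is the probability that, when w selects an ordered pair of its neighbors uniformly at random with replacement, the pair is (u, v) with v at distance two from u, i.e., that u gets connected to a vertex of N²(u) through w in one triangulation step.) -/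
open scoped Classical

noncomputable section

variable {V : Type} [Fintype V] [DecidableEq V]

/-- The neighbors of `v` in `G`, as a `Finset`. -/
def nbr (G : SimpleGraph V) (v : V) : Finset V := Finset.univ.filter (fun w => G.Adj v w)

/-- The degree `d(v)` of `v` in `G`. -/
def deg (G : SimpleGraph V) (v : V) : ℕ := (nbr G v).card

/-- `Nk G u i` is the set `Nⁱ(u)` of vertices at graph distance exactly `i` from `u`. -/
def Nk (G : SimpleGraph V) (u : V) (i : ℕ) : Finset V :=
  Finset.univ.filter (fun v => v ≠ u ∧ G.dist u v = i)

/-- `degIn G v S` is `d(v, S)`, the number of neighbors of `v` lying in `S`. -/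
def degIn (G : SimpleGraph V) (v : V) (S : Finset V) : ℕ := (nbr G v ∩ S).card

end

lemma deg_le_degIn_add_deg {V : Type} [Fintype V] [DecidableEq V] (G : SimpleGraph V)
    (u w : V) (hw : w ∈ nbr G u) :
    deg G w ≤ degIn G w (Nk G u 2) + deg G u := by
  classical
  have huw : G.Adj u w := by simpa [nbr] using hw
  have hkey : deg G w = degIn G w (Nk G u 2) + (nbr G w \ Nk G u 2).card := by
    rw [deg, degIn, Finset.card_inter_add_card_sdiff]
  rw [hkey]
  apply Nat.add_le_add_left
  have hsub : nbr G w \ Nk G u 2 ⊆ (insert u (nbr G u)).erase w := by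
    intro v hv
    rw [Finset.mem_sdiff] at hv
    obtain ⟨hv1, hv2⟩ := hv
    have hadj : G.Adj w v := by simpa [nbr] using hv1
    rw [Finset.mem_erase]
    refine ⟨fun h => by simp [h] at hadj, ?_⟩
    by_cases hvu : v = u
    · simp [hvu]
    · -- dist u v ≤ 2
      have hle : G.dist u v ≤ 2 := by
        have := SimpleGraph.dist_le (SimpleGraph.Walk.cons huw
          (SimpleGraph.Walk.cons hadj SimpleGraph.Walk.nil))
        simpa using this
      have hne2 : G.dist u v ≠ 2 := by
        intro h
        exact hv2 (by simp [Nk, hvu, h])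
      have hne0 : G.dist u v ≠ 0 := by
        intro h
        rcases SimpleGraph.dist_eq_zero_iff_eq_or_not_reachable.mp h with h' | h'
        · exact hvu h'.symm
        · exact h' (huw.reachable.trans hadj.reachable)
      have h1 : G.dist u v = 1 := by omega
      have : G.Adj u v := SimpleGraph.dist_eq_one_iff_adj.mp h1
      simp [nbr, this]
  calc (nbr G w \ Nk G u 2).card ≤ ((insert u (nbr G u)).erase w).card :=
        Finset.card_le_card hsub
    _ ≤ (insert u (nbr G u)).card - 1 := by
        rw [Finset.card_erase_of_mem (by simp [hw])]
    _ ≤ deg G u := by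
        rw [deg]
        have := Finset.card_insert_le u (nbr G u)
        omega

/-- Let `G` be a finite simple graph on `n` vertices, `δ₀ > 0` a real
number, and `u` a vertex with `δ₀ ≤ d(u) < (1 + 1/4)·δ₀`.  Let `w` be a neighbor of `u`
with `d(w, N²(u)) ≥ δ₀/2` (i.e. `w` is strongly tied to `N²(u)`).  Then
`d(w, N²(u)) / d(w)² ≥ 2/(7n)`; this is the probability that `u` gets connected to a
vertex of `N²(u)` through `w` in one triangulation step. -/
theorem strongly_tied_push_prob
    {V : Type} [Fintype V] [DecidableEq V] (G : SimpleGraph V)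
    (n : ℕ) (hn : Fintype.card V = n)
    (δ₀ : ℝ) (hδ₀ : 0 < δ₀) (u : V)
    (hd₁ : δ₀ ≤ (deg G u : ℝ)) (hd₂ : (deg G u : ℝ) < (1 + 1/4) * δ₀)
    (w : V) (hw : w ∈ nbr G u)
    (hstrong : δ₀ / 2 ≤ (degIn G w (Nk G u 2) : ℝ)) :
    2 / (7 * n) ≤ (degIn G w (Nk G u 2) : ℝ) / (deg G w : ℝ) ^ 2 := by
  set x : ℝ := (degIn G w (Nk G u 2) : ℝ) with hx
  set d : ℝ := (deg G w : ℝ) with hd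
  have hxpos : 0 < x := lt_of_lt_of_le (by linarith) hstrong
  have hxd : x ≤ d := by
    rw [hx, hd]
    exact_mod_cast Finset.card_le_card (Finset.inter_subset_left)
  have hdpos : 0 < d := lt_of_lt_of_le hxpos hxd
  have hdn : d ≤ (n : ℝ) := by
    rw [hd, ← hn]
    exact_mod_cast Finset.card_le_card (Finset.subset_univ _)
  have hnpos : (0 : ℝ) < n := lt_of_lt_of_le hdpos hdn
  have hkey : d ≤ x + (deg G u : ℝ) := by
    rw [hx, hd]
    exact_mod_cast deg_le_degIn_add_deg G u w hw
  -- d(u) < (5/4)δ₀ ≤ (5/2)x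
  have hδx : δ₀ ≤ 2 * x := by linarith
  have hdlt : d ≤ (7/2) * x := by nlinarith
  rw [div_le_div_iff₀ (by positivity) (by positivity)]
  nlinarith [mul_le_mul hdlt hdn (le_of_lt hdpos) (by positivity : (0:ℝ) ≤ (7/2)*x),
    hxpos.le, hnpos.le]
end

section
/- There exists a constant C > 0 such that the following holds for every n ≥ 2, every connected initial graph G₀ on n vertices, and every vertex u. Let T = ⌈C·n·ln n⌉. Then the probability (over the trajectory of the triangulation process started at G₀) of the event that both (i) for every round t < T, more than δ₀/4 vertices of N_t¹(u) are strongly tied to N_t²(u), and (ii) d_T(u) < (1 + 1/4)·δ₀, is at most 1/n². -/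
open scoped Classical

noncomputable section

variable {V : Type} [Fintype V] [DecidableEq V]

/-- The minimum degree of `G`. -/
def minDeg (G : SimpleGraph V) : ℕ := sInf (Set.range (deg G))

/-- The graph obtained from a choice function `c` in one round of the triangulation
process: every vertex `w` adds the edge joining the ordered pair `c w` of its chosen
neighbors (edges are unordered, loops are discarded, all additions are simultaneous). -/
def triNext (G : SimpleGraph V) (c : V → V × V) : SimpleGraph V :=
  G ⊔ SimpleGraph.fromEdgeSet {e | ∃ v : V, e = s((c v).1, (c v).2)}

/-- The probability that in one round of the triangulation process on the current
graph `G` the vertices make exactly the choices recorded by `c`: each vertex with at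
least one neighbor independently picks an ordered pair of its neighbors uniformly at
random with replacement; isolated vertices are given the dummy choice `(v, v)`. -/
def triWeight (G : SimpleGraph V) (c : V → V × V) : ℝ :=
  ∏ v : V,
    if deg G v = 0 then (if c v = (v, v) then 1 else 0)
    else if (c v).1 ∈ nbr G v ∧ (c v).2 ∈ nbr G v then (1 : ℝ) / (deg G v : ℝ) ^ 2 else 0

/-- Transition probability of one round of the triangulation process. -/
def triStep (G G' : SimpleGraph V) : ℝ :=
  ∑ c : V → V × V, if triNext G c = G' then triWeight G c else 0

/-- The graph obtained from a choice function `c` in one round of the two-hop walk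
process: every vertex `u` adds the edge to the endpoint `(c u).2` of its two-hop walk
(loops are discarded, all additions are simultaneous). -/
def hopNext (G : SimpleGraph V) (c : V → V × V) : SimpleGraph V :=
  G ⊔ SimpleGraph.fromEdgeSet {e | ∃ u : V, e = s(u, (c u).2)}

/-- The probability that in one round of the two-hop walk process on the current graph
`G` the vertices make exactly the choices recorded by `c`: each vertex `u` with at
least one neighbor independently picks a uniformly random neighbor `v = (c u).1` and
then a uniformly random neighbor `w = (c u).2` of `v`; isolated vertices are given the
dummy choice `(u, u)`. -/
def hopWeight (G : SimpleGraph V) (c : V → V × V) : ℝ :=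
  ∏ u : V,
    if deg G u = 0 then (if c u = (u, u) then 1 else 0)
    else if (c u).1 ∈ nbr G u ∧ (c u).2 ∈ nbr G (c u).1
      then (1 : ℝ) / ((deg G u : ℝ) * (deg G (c u).1 : ℝ)) else 0

/-- Transition probability of one round of the two-hop walk process. -/
def hopStep (G G' : SimpleGraph V) : ℝ :=
  ∑ c : V → V × V, if hopNext G c = G' then hopWeight G c else 0

/-- `trajProb step g0 T E` is the probability, for the Markov chain on a finite state
space `Γ` with one-step transition probabilities `step` started at `g0`, that the
trajectory `(g_0, g_1, …, g_T)` satisfies the event `E`; probabilities are realized as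
a probability mass function on finite sequences of states.  (The trajectory is passed
to `E` as a function on `ℕ`, frozen at time `T`.) -/
def trajProb {Γ : Type} [Fintype Γ] (step : Γ → Γ → ℝ) (g0 : Γ) (T : ℕ)
    (E : (ℕ → Γ) → Prop) : ℝ :=
  ∑ s : Fin (T + 1) → Γ,
    if s 0 = g0 ∧ E (fun t => s ⟨min t T, Nat.lt_succ_of_le (Nat.min_le_right t T)⟩)
    then ∏ t : Fin T, step (s t.castSucc) (s t.succ) else 0

end

/-!
While more than `δ₀/4` neighbours `v` of `u` are strongly tied to `N²(u)` and `d(u) < 5δ₀/4`,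
each such `v` has at least `d(v)/18` neighbours at distance two from `u`, so it independently
adds an edge at `u` with probability at least `1/(9n)`. Hence `d(u)` fails to grow in a round
with probability at most `(1 - 1/(9n))^k`, where `k = ⌊δ₀/4⌋ + 1`. On the event, `d(u)` grows
fewer than `k` times before time `T`, so one of `k` consecutive blocks of `⌊T/k⌋` rounds sees no
growth at all, and a union bound over the blocks gives
`k (1 - 1/(9n))^(k⌊T/k⌋) ≤ n · e^(-3 ln n) = 1/n²` for `C = 100`.
-/

open Finset

section MarkovChain

variable {Γ : Type} [Fintype Γ]

noncomputable def pathProb (step : Γ → Γ → ℝ) (g0 : Γ) (T : ℕ) (P : ℕ → Γ → Γ → Prop) : ℝ :=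
  ∑ s : Fin (T + 1) → Γ,
    if s 0 = g0 ∧ ∀ t : Fin T, P t (s t.castSucc) (s t.succ)
    then ∏ t : Fin T, step (s t.castSucc) (s t.succ) else 0

variable (step : Γ → Γ → ℝ)

lemma pathProb_zero (g0 : Γ) (P : ℕ → Γ → Γ → Prop) : pathProb step g0 0 P = 1 := by
  rw [pathProb, ← Equiv.sum_comp (Equiv.funUnique (Fin 1) Γ).symm]
  simp

lemma pathProb_succ (g0 : Γ) (T : ℕ) (P : ℕ → Γ → Γ → Prop) :
    pathProb step g0 (T + 1) P =
      ∑ y, (if P 0 g0 y then step g0 y else 0) * pathProb step y T (fun t => P (t + 1)) := by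
  simp only [pathProb, mul_sum]
  rw [← Equiv.sum_comp (Fin.consEquiv fun _ => Γ), Fintype.sum_prod_type,
    sum_eq_single g0 (fun x _ hx => by simp [Fin.consEquiv, hx]) (by simp)]
  conv_rhs => rw [sum_comm]
  refine sum_congr rfl fun s _ => ?_
  simp only [ite_and, mul_ite, mul_zero, sum_ite_eq, mem_univ, if_true]
  simp [Fin.consEquiv, Fin.forall_fin_succ, Fin.prod_univ_succ, ite_and]
  split_ifs <;> rfl

variable {step}

lemma pathProb_le_prod (hstep : ∀ x y, 0 ≤ step x y) {T : ℕ} {P : ℕ → Γ → Γ → Prop}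
    {r : ℕ → ℝ} (hr : ∀ t, 0 ≤ r t)
    (hP : ∀ t < T, ∀ x, ∑ y, (if P t x y then step x y else 0) ≤ r t) (g0 : Γ) :
    pathProb step g0 T P ≤ ∏ t ∈ range T, r t := by
  induction T generalizing P r g0 with
  | zero => simp [pathProb_zero]
  | succ T ih =>
    have hrest := ih (fun t => hr (t + 1)) (fun t ht => hP (t + 1) (by omega))
    calc pathProb step g0 (T + 1) P
        ≤ ∑ y, (if P 0 g0 y then step g0 y else 0) * ∏ t ∈ range T, r (t + 1) := by
          rw [pathProb_succ]
          gcongr with y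
          · split_ifs <;> simp [hstep]
          · exact hrest y
      _ = (∑ y, if P 0 g0 y then step g0 y else 0) * ∏ t ∈ range T, r (t + 1) :=
          (sum_mul ..).symm
      _ ≤ r 0 * ∏ t ∈ range T, r (t + 1) := by
          gcongr
          · exact prod_nonneg fun t _ => hr _
          · exact hP 0 (by omega) g0
      _ = ∏ t ∈ range (T + 1), r t := by rw [prod_range_succ', mul_comm]

lemma pathProb_le_pow (hstep : ∀ x y, 0 ≤ step x y) (hrow : ∀ x, ∑ y, step x y ≤ 1)
    {T : ℕ} {P : ℕ → Γ → Γ → Prop} {I : Finset ℕ} (hI : I ⊆ range T) {q : ℝ} (hq0 : 0 ≤ q)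
    (hq : ∀ t ∈ I, ∀ x, ∑ y, (if P t x y then step x y else 0) ≤ q)
    (hfree : ∀ t ∉ I, ∀ x y, P t x y) (g0 : Γ) :
    pathProb step g0 T P ≤ q ^ #I := by
  calc pathProb step g0 T P ≤ ∏ t ∈ range T, if t ∈ I then q else 1 := by
        refine pathProb_le_prod hstep (fun t => by split_ifs <;> simp [hq0]) (fun t _ x => ?_) g0
        by_cases ht : t ∈ I
        · simpa [ht] using hq t ht x
        · simpa [ht, hfree t ht x] using hrow x
    _ = q ^ #I := by rw [prod_ite_mem, inter_eq_right.2 hI, prod_const]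

lemma trajProb_le_sum_pathProb (hstep : ∀ x y, 0 ≤ step x y) {ι : Type*} (I : Finset ι)
    (P : ι → ℕ → Γ → Γ → Prop) {g0 : Γ} {T : ℕ} {E : (ℕ → Γ) → Prop}
    (hE : ∀ g : ℕ → Γ, g 0 = g0 → (∀ t < T, step (g t) (g (t + 1)) ≠ 0) →
      (∀ t, T ≤ t → g t = g T) → E g → ∃ i ∈ I, ∀ t < T, P i t (g t) (g (t + 1))) :
    trajProb step g0 T E ≤ ∑ i ∈ I, pathProb step g0 T (P i) := by
  unfold trajProb pathProb
  rw [sum_comm]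
  refine sum_le_sum fun s _ => ?_
  set g : ℕ → Γ := fun t => s ⟨min t T, Nat.lt_succ_of_le (Nat.min_le_right t T)⟩
  have hcast : ∀ t : Fin T, g t = s t.castSucc :=
    fun t => congrArg s (Fin.ext (min_eq_left t.isLt.le))
  have hsucc : ∀ t : Fin T, g (t + 1) = s t.succ :=
    fun t => congrArg s (Fin.ext (min_eq_left t.isLt))
  have hweight_nonneg : ∀ (Q : Prop) [Decidable Q],
      0 ≤ if Q then ∏ t : Fin T, step (s t.castSucc) (s t.succ) else 0 :=
    fun Q _ => by split_ifs <;> simp [prod_nonneg, hstep]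
  by_cases h : s 0 = g0 ∧ E g
  swap
  · exact (if_neg h).trans_le (sum_nonneg fun i _ => hweight_nonneg _)
  rw [if_pos h]
  by_cases hzero : ∏ t : Fin T, step (s t.castSucc) (s t.succ) = 0
  · exact hzero ▸ sum_nonneg fun i _ => hweight_nonneg _
  have hpos : ∀ t < T, step (g t) (g (t + 1)) ≠ 0 := fun t ht => by
    rw [hcast ⟨t, ht⟩, hsucc ⟨t, ht⟩]
    exact prod_ne_zero_iff.mp hzero _ (mem_univ _)
  obtain ⟨i, hi, hPi⟩ := hE g ((congrArg s (Fin.ext (Nat.zero_min T))).trans h.1) hpos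
    (fun t ht => congrArg s (Fin.ext (by simp [min_eq_right ht]))) h.2
  refine le_trans (le_of_eq ?_) (single_le_sum (fun i _ => hweight_nonneg _) hi)
  rw [if_pos ⟨h.1, fun t => hcast t ▸ hsucc t ▸ hPi t t.isLt⟩]

lemma exists_block_eq_of_lt_add {f : ℕ → ℕ} (hf : Monotone f) {k L : ℕ}
    (h : f (k * L) < f 0 + k) : ∃ b < k, f (b * L) = f ((b + 1) * L) := by
  by_contra! hne
  have hgrowth : ∀ b ≤ k, f 0 + b ≤ f (b * L) := by
    intro b hb
    induction b with
    | zero => simp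
    | succ b ih =>
      have hlt := (hf (Nat.mul_le_mul_right L (show b ≤ b + 1 by omega))).lt_of_ne
        (hne b (by omega))
      have := ih (by omega)
      omega
  have := hgrowth k le_rfl
  omega

theorem trajProb_le_of_slow_growth (hstep : ∀ x y, 0 ≤ step x y)
    (hrow : ∀ x, ∑ y, step x y ≤ 1) {f : Γ → ℕ} (hmono : ∀ x y, step x y ≠ 0 → f x ≤ f y)
    {A B : Γ → Prop} (hB : ∀ x y, f x ≤ f y → B y → B x) {g0 : Γ} {k : ℕ}
    (hk : ∀ x, B x → f x < f g0 + k) {q : ℝ} (hq0 : 0 ≤ q)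
    (hq : ∀ x, A x → B x → ∑ y, (if f y ≤ f x then step x y else 0) ≤ q) (T : ℕ) :
    trajProb step g0 T (fun g => (∀ t < T, A (g t)) ∧ B (g T)) ≤ k * q ^ (T / k) := by
  set L := T / k
  let block (b : ℕ) : Finset ℕ := Finset.Ico (b * L) ((b + 1) * L)
  let P (b t : ℕ) (x y : Γ) : Prop := t ∈ block b → (A x ∧ B x) ∧ f y ≤ f x
  have hkL : k * L ≤ T := Nat.mul_div_le T k
  calc trajProb step g0 T (fun g => (∀ t < T, A (g t)) ∧ B (g T))
      ≤ ∑ b ∈ range k, pathProb step g0 T (P b) := by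
        refine trajProb_le_sum_pathProb hstep _ _ fun g hg0 hpos hfrozen ⟨hA, hBT⟩ => ?_
        have hgmono : Monotone (f ∘ g) := monotone_nat_of_le_succ fun t => by
          by_cases ht : t < T
          · exact hmono _ _ (hpos t ht)
          · simp [Function.comp, hfrozen t (by omega), hfrozen (t + 1) (by omega)]
        obtain ⟨b, hb, hflat⟩ := exists_block_eq_of_lt_add hgmono
          ((hgmono hkL).trans_lt (by simpa [hg0] using hk _ hBT))
        refine ⟨b, mem_range.2 hb, fun t ht hblock => ?_⟩
        obtain ⟨hlo, hhi⟩ := mem_Ico.1 hblock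
        refine ⟨⟨hA t ht, hB _ _ (hgmono (by omega)) hBT⟩, ?_⟩
        calc f (g (t + 1)) ≤ f (g ((b + 1) * L)) := hgmono hhi
          _ = f (g (b * L)) := hflat.symm
          _ ≤ f (g t) := hgmono hlo
    _ ≤ ∑ b ∈ range k, q ^ L := by
        refine sum_le_sum fun b hb => ?_
        have hsub : block b ⊆ range T := fun t ht => by
          have := Nat.mul_le_mul_right L (show b + 1 ≤ k from mem_range.1 hb)
          simp only [block, mem_Ico, mem_range] at ht ⊢
          omega
        have hcard : #(block b) = L := by
          rw [Nat.card_Ico, add_mul, one_mul, Nat.add_sub_cancel_left]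
        refine hcard ▸ pathProb_le_pow hstep hrow hsub hq0 (fun t ht x => ?_)
          (fun t ht x y h => absurd h ht) g0
        by_cases hx : A x ∧ B x
        · simpa [P, ht, hx] using hq x hx.1 hx.2
        · simp [P, ht, hx, hq0]
    _ = k * q ^ L := by simp

end MarkovChain

lemma sum_prod_avoiding_le {ι α : Type*} [Fintype ι] [DecidableEq ι] [Fintype α] [DecidableEq α]
    {f : ι → α → ℝ} (hf : ∀ i a, 0 ≤ f i a) (hsum : ∀ i, ∑ a, f i a = 1) (S : Finset ι)
    (bad : ι → Finset α) {ε : ℝ} (hε : ∀ i ∈ S, ε ≤ ∑ a ∈ bad i, f i a) :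
    ∑ c : ι → α, (if ∀ i ∈ S, c i ∉ bad i then ∏ i, f i (c i) else 0) ≤ (1 - ε) ^ #S := by
  let g (i : ι) (a : α) : ℝ := if i ∈ S ∧ a ∈ bad i then 0 else f i a
  have hg : ∀ i, ∑ a, g i a ≤ if i ∈ S then 1 - ε else 1 := fun i => by
    by_cases hi : i ∈ S
    · have hsplit := sum_compl_add_sum (bad i) (f i)
      simp only [g, hi, true_and, if_true]
      rw [← sum_compl_add_sum (bad i), sum_ite_of_false fun a ha => mem_compl.1 ha,
        sum_ite_of_true fun a ha => ha, sum_const_zero, add_zero]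
      linarith [hsum i, hε i hi]
    · simp [g, hi, hsum]
  calc ∑ c : ι → α, (if ∀ i ∈ S, c i ∉ bad i then ∏ i, f i (c i) else 0)
      = ∑ c : ι → α, ∏ i, g i (c i) := by
        refine sum_congr rfl fun c _ => ?_
        by_cases hc : ∀ i ∈ S, c i ∉ bad i
        · rw [if_pos hc]
          exact prod_congr rfl fun i _ => (if_neg fun h => hc i h.1 h.2).symm
        · obtain ⟨i, hi, hci⟩ : ∃ i ∈ S, c i ∈ bad i := by simpa using hc
          rw [if_neg hc, eq_comm]
          exact prod_eq_zero (mem_univ i) (by simp [g, hi, hci])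
    _ = ∏ i, ∑ a, g i a := (Fintype.prod_sum g).symm
    _ ≤ ∏ i, if i ∈ S then 1 - ε else 1 :=
        prod_le_prod (fun i _ => sum_nonneg fun a _ => by
          simp only [g]; split_ifs <;> simp [hf]) fun i _ => hg i
    _ = (1 - ε) ^ #S := by rw [prod_ite_mem, univ_inter, prod_const]

lemma one_sub_one_div_nine_mul_nonneg {n : ℕ} (hn : 1 ≤ n) : 0 ≤ 1 - 1 / (9 * n : ℝ) := by
  have : (1 : ℝ) ≤ n := by exact_mod_cast hn
  rw [sub_nonneg, div_le_one (by positivity)]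
  linarith

lemma one_div_le_two_mul_div_sq {d m n : ℕ} (hd : 0 < d) (hdn : d ≤ n) (hdm : d ≤ 18 * m) :
    1 / (9 * (n : ℝ)) ≤ 2 * m / (d : ℝ) ^ 2 := by
  have hd' : (0 : ℝ) < d := by exact_mod_cast hd
  have hdn' : (d : ℝ) ≤ n := by exact_mod_cast hdn
  have hdm' : (d : ℝ) ≤ 18 * m := by exact_mod_cast hdm
  rw [div_le_div_iff₀ (by linarith) (by positivity)]
  nlinarith

lemma nat_mul_one_sub_pow_le_inv_sq {n k T : ℕ} (hn : 2 ≤ n) (hk : 1 ≤ k) (hkn : k ≤ n)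
    (hT : 100 * n * Real.log n ≤ T) :
    (k : ℝ) * ((1 - 1 / (9 * n : ℝ)) ^ k) ^ (T / k) ≤ 1 / (n : ℝ) ^ 2 := by
  set ρ : ℝ := 1 - 1 / (9 * n)
  have hn' : (2 : ℝ) ≤ n := by exact_mod_cast hn
  have hρ0 : 0 ≤ ρ := one_sub_one_div_nine_mul_nonneg (by omega)
  have hρexp : ρ ≤ Real.exp (-(1 / (9 * n))) := by
    linarith [Real.add_one_le_exp (-(1 / (9 * (n : ℝ))))]
  have hlog : 1 ≤ 73 * Real.log n := by
    have := Real.log_le_log (by norm_num) hn'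
    linarith [Real.log_two_gt_d9]
  have hblocks : (T : ℝ) - n ≤ (k * (T / k) : ℕ) := by
    have h1 : T < k * (T / k) + k := by
      rw [mul_comm]
      exact Nat.lt_div_mul_add (by omega)
    have h2 : (T : ℝ) < (k * (T / k) : ℕ) + k := by exact_mod_cast h1
    have h3 : (k : ℝ) ≤ n := by exact_mod_cast hkn
    linarith
  have hdecay : ρ ^ (k * (T / k)) ≤ 1 / (n : ℝ) ^ 3 := calc
    ρ ^ (k * (T / k)) ≤ Real.exp (-(1 / (9 * n))) ^ (k * (T / k)) :=
      pow_le_pow_left₀ hρ0 hρexp _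
    _ = Real.exp (-((k * (T / k) : ℕ) / (9 * n))) := by
      rw [← Real.exp_nat_mul]
      ring_nf
    _ ≤ Real.exp (-(3 * Real.log n)) := by
      rw [Real.exp_le_exp, neg_le_neg_iff, le_div_iff₀ (by positivity)]
      nlinarith [mul_le_mul_of_nonneg_left hlog (by positivity : (0 : ℝ) ≤ n)]
    _ = 1 / (n : ℝ) ^ 3 := by
      rw [Real.exp_neg, ← Real.exp_log (by positivity : (0 : ℝ) < n ^ 3), Real.log_pow,
        one_div]
      norm_num
  calc (k : ℝ) * (ρ ^ k) ^ (T / k) = k * ρ ^ (k * (T / k)) := by rw [pow_mul]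
    _ ≤ n * (1 / (n : ℝ) ^ 3) :=
      mul_le_mul (by exact_mod_cast hkn) hdecay (pow_nonneg hρ0 _) (by positivity)
    _ = 1 / (n : ℝ) ^ 2 := by
      field_simp

section Degree

variable {V : Type} [Fintype V]

lemma deg_mono {G G' : SimpleGraph V} (h : G ≤ G') (u : V) : deg G u ≤ deg G' u :=
  card_le_card fun w hw => by simpa [nbr] using h (by simpa [nbr] using hw)

lemma minDeg_le_deg (G : SimpleGraph V) (u : V) : minDeg G ≤ deg G u :=
  Nat.sInf_le ⟨u, rfl⟩

lemma deg_le_card (G : SimpleGraph V) (u : V) : deg G u ≤ Fintype.card V :=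
  card_le_univ _

end Degree

section Triangulation

variable {V : Type} [Fintype V] [DecidableEq V]

noncomputable def triFactor (G : SimpleGraph V) (v : V) (p : V × V) : ℝ :=
  if deg G v = 0 then (if p = (v, v) then 1 else 0)
  else if p.1 ∈ nbr G v ∧ p.2 ∈ nbr G v then (1 : ℝ) / (deg G v : ℝ) ^ 2 else 0

lemma triWeight_eq_prod (G : SimpleGraph V) (c : V → V × V) :
    triWeight G c = ∏ v, triFactor G v (c v) := rfl

lemma triFactor_nonneg (G : SimpleGraph V) (v : V) (p : V × V) : 0 ≤ triFactor G v p := by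
  unfold triFactor
  split_ifs <;> positivity

lemma sum_triFactor (G : SimpleGraph V) (v : V) : ∑ p, triFactor G v p = 1 := by
  by_cases h : deg G v = 0
  · simp [triFactor, h]
  · have hd : (deg G v : ℝ) ≠ 0 := Nat.cast_ne_zero.2 h
    simp only [triFactor, h, if_false]
    have hpairs : (univ.filter fun p : V × V => p.1 ∈ nbr G v ∧ p.2 ∈ nbr G v) =
        nbr G v ×ˢ nbr G v := by
      ext p
      simp
    rw [← sum_filter, hpairs, sum_const, card_product, nsmul_eq_mul]
    push_cast [deg] at hd ⊢
    field_simp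

lemma triStep_nonneg (G G' : SimpleGraph V) : 0 ≤ triStep G G' :=
  sum_nonneg fun c _ => by
    split_ifs
    · exact prod_nonneg fun v _ => triFactor_nonneg G v _
    · exact le_rfl

lemma sum_triStep_ite (G : SimpleGraph V) (Q : SimpleGraph V → Prop) [DecidablePred Q] :
    ∑ G', (if Q G' then triStep G G' else 0) =
      ∑ c, if Q (triNext G c) then triWeight G c else 0 := by
  calc ∑ G', (if Q G' then triStep G G' else 0)
      = ∑ G', ∑ c, if triNext G c = G' then (if Q G' then triWeight G c else 0) else 0 :=
        sum_congr rfl fun G' _ => by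
          by_cases hQ : Q G' <;> simp [triStep, hQ]
    _ = ∑ c, if Q (triNext G c) then triWeight G c else 0 := by
        rw [sum_comm]
        simp

lemma sum_triStep (G : SimpleGraph V) : ∑ G', triStep G G' = 1 := by
  simpa [triWeight_eq_prod, ← Fintype.prod_sum, sum_triFactor] using sum_triStep_ite G fun _ => True

lemma le_of_triStep_ne_zero {G G' : SimpleGraph V} (h : triStep G G' ≠ 0) : G ≤ G' := by
  obtain ⟨c, -, hc⟩ := exists_ne_zero_of_sum_ne_zero h
  rw [ne_eq, ite_eq_right_iff, Classical.not_imp] at hc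
  exact hc.1 ▸ le_sup_left

lemma deg_lt_deg_triNext {G : SimpleGraph V} {c : V → V × V} {u v w : V}
    (hc : s((c v).1, (c v).2) = s(u, w)) (hw : w ∉ insert u (nbr G u)) :
    deg G u < deg (triNext G c) u := by
  have hwu : w ≠ u := fun h => hw (by simp [h])
  have hnew : (triNext G c).Adj u w :=
    Or.inr ((SimpleGraph.fromEdgeSet_adj _).2 ⟨⟨v, hc.symm⟩, hwu.symm⟩)
  refine card_lt_card ((ssubset_iff_of_subset fun x hx => ?_).2 ⟨w, ?_, ?_⟩)
  · simp only [nbr, mem_filter, mem_univ, true_and] at hx ⊢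
    exact (le_sup_left : G ≤ triNext G c) hx
  · simpa [nbr] using hnew
  · exact fun h => hw (mem_insert_of_mem h)

-- For `v ∈ N¹(u)` this is the set of neighbours of `v` in `N²(u)`.
noncomputable def farNbr (G : SimpleGraph V) (u v : V) : Finset V := nbr G v \ insert u (nbr G u)

noncomputable def hitPicks (G : SimpleGraph V) (u v : V) : Finset (V × V) :=
  {u} ×ˢ farNbr G u v ∪ farNbr G u v ×ˢ {u}

lemma deg_lt_deg_triNext_of_mem_hitPicks {G : SimpleGraph V} {c : V → V × V} {u v : V}
    (h : c v ∈ hitPicks G u v) : deg G u < deg (triNext G c) u := by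
  simp only [hitPicks, mem_union, mem_product, mem_singleton] at h
  rcases h with ⟨h1, h2⟩ | ⟨h1, h2⟩
  · exact deg_lt_deg_triNext (w := (c v).2) (by rw [h1]) (mem_sdiff.1 h2).2
  · exact deg_lt_deg_triNext (w := (c v).1) (by rw [h2, Sym2.eq_swap]) (mem_sdiff.1 h1).2

lemma card_hitPicks (G : SimpleGraph V) (u v : V) :
    #(hitPicks G u v) = 2 * #(farNbr G u v) := by
  have hu : u ∉ farNbr G u v := fun h => (mem_sdiff.1 h).2 (mem_insert_self u _)
  rw [hitPicks, card_union_of_disjoint, card_product, card_product, card_singleton]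
  · ring
  · exact disjoint_left.2 fun p h1 h2 => hu (by
      simp only [mem_product, mem_singleton] at h1 h2
      exact h2.2 ▸ h1.2)

lemma sum_triFactor_hitPicks {G : SimpleGraph V} {u v : V} (hvu : G.Adj v u) :
    ∑ p ∈ hitPicks G u v, triFactor G v p = 2 * #(farNbr G u v) / (deg G v : ℝ) ^ 2 := by
  have hu : u ∈ nbr G v := by simpa [nbr] using hvu
  have hdeg : deg G v ≠ 0 := (card_pos.2 ⟨u, hu⟩).ne'
  have hfar : farNbr G u v ⊆ nbr G v := sdiff_subset
  have hval : ∀ p ∈ hitPicks G u v, triFactor G v p = 1 / (deg G v : ℝ) ^ 2 := fun p hp => by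
    simp only [hitPicks, mem_union, mem_product, mem_singleton] at hp
    rw [triFactor, if_neg hdeg, if_pos]
    rcases hp with ⟨h1, h2⟩ | ⟨h1, h2⟩
    · exact ⟨h1 ▸ hu, hfar h2⟩
    · exact ⟨hfar h1, h2 ▸ hu⟩
  rw [sum_congr rfl hval, sum_const, card_hitPicks, nsmul_eq_mul]
  push_cast
  ring

lemma degIn_le_card_farNbr (G : SimpleGraph V) (u v : V) :
    degIn G v (Nk G u 2) ≤ #(farNbr G u v) := by
  refine card_le_card fun w hw => ?_
  simp only [Nk, mem_inter, mem_filter, mem_univ, true_and] at hw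
  refine mem_sdiff.2 ⟨hw.1, fun h => ?_⟩
  rcases mem_insert.1 h with rfl | hwu
  · exact hw.2.1 rfl
  · have := SimpleGraph.dist_eq_one_iff_adj.2 (by simpa [nbr] using hwu)
    omega

lemma deg_le_card_farNbr_add (G : SimpleGraph V) (u v : V) :
    deg G v ≤ #(farNbr G u v) + deg G u + 1 := by
  have := card_insert_le u (nbr G u)
  have : deg G v ≤ #(farNbr G u v) + #(insert u (nbr G u)) := card_le_card_sdiff_add_card
  unfold deg at *
  omega

noncomputable def stronglyTied (G : SimpleGraph V) (u : V) (δ : ℕ) : Finset V :=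
  (Nk G u 1).filter fun v => (δ : ℝ) / 2 ≤ (degIn G v (Nk G u 2) : ℝ)

lemma sum_triStep_deg_le_le {G : SimpleGraph V} {u : V} {δ : ℕ}
    (hS : (δ : ℝ) / 4 < #(stronglyTied G u δ)) (hu : (deg G u : ℝ) < (1 + 1 / 4) * δ) :
    ∑ G', (if deg G' u ≤ deg G u then triStep G G' else 0) ≤
      (1 - 1 / (9 * Fintype.card V : ℝ)) ^ (δ / 4 + 1) := by
  set S := stronglyTied G u δ
  have hmass : ∀ v ∈ S, 1 / (9 * Fintype.card V : ℝ) ≤ ∑ p ∈ hitPicks G u v, triFactor G v p := by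
    intro v hv
    simp only [S, stronglyTied, mem_filter] at hv
    have hvu : G.Adj v u := (SimpleGraph.dist_eq_one_iff_adj.1 (mem_filter.1 hv.1).2.2).symm
    rw [sum_triFactor_hitPicks hvu]
    refine one_div_le_two_mul_div_sq (card_pos.2 ⟨u, by simpa [nbr] using hvu⟩)
      (card_le_univ _) ?_
    -- `d(v) ≤ #far + d(u) + 1`, `d(u) < 5δ/4` and `δ ≤ 2 #far` give `d(v) ≤ 18 #far`.
    have h1 := deg_le_card_farNbr_add G u v
    have h2 : δ ≤ 2 * degIn G v (Nk G u 2) := by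
      have := hv.2
      exact_mod_cast (by linarith : (δ : ℝ) ≤ 2 * degIn G v (Nk G u 2))
    have h3 : 4 * deg G u < 5 * δ := by exact_mod_cast (by linarith : (4 * deg G u : ℝ) < 5 * δ)
    have h4 := degIn_le_card_farNbr G u v
    omega
  have hk : δ / 4 + 1 ≤ #S := by
    have : δ < 4 * #S := by exact_mod_cast (by linarith : (δ : ℝ) < 4 * #S)
    omega
  have hρ : 0 ≤ 1 - 1 / (9 * Fintype.card V : ℝ) :=
    one_sub_one_div_nine_mul_nonneg (Fintype.card_pos_iff.2 ⟨u⟩)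
  calc ∑ G', (if deg G' u ≤ deg G u then triStep G G' else 0)
      = ∑ c, if deg (triNext G c) u ≤ deg G u then triWeight G c else 0 := sum_triStep_ite ..
    _ ≤ ∑ c : V → V × V, if ∀ v ∈ S, c v ∉ hitPicks G u v then ∏ v, triFactor G v (c v) else 0 := by
        refine sum_le_sum fun c _ => ?_
        by_cases hc : ∀ v ∈ S, c v ∉ hitPicks G u v
        · rw [if_pos hc, ← triWeight_eq_prod]
          split_ifs
          · exact le_rfl
          · exact prod_nonneg fun v _ => triFactor_nonneg G v _
        · obtain ⟨v, -, hv⟩ : ∃ v ∈ S, c v ∈ hitPicks G u v := by simpa using hc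
          rw [if_neg (deg_lt_deg_triNext_of_mem_hitPicks hv).not_ge, if_neg hc]
    _ ≤ (1 - 1 / (9 * Fintype.card V : ℝ)) ^ #S :=
        sum_prod_avoiding_le (f := triFactor G) (triFactor_nonneg G) (sum_triFactor G) S
          (hitPicks G u) hmass
    _ ≤ (1 - 1 / (9 * Fintype.card V : ℝ)) ^ (δ / 4 + 1) :=
        pow_le_pow_of_le_one hρ (sub_le_self _ (by positivity)) hk

end Triangulation

/-- There is a constant `C > 0` such that for every `n ≥ 2`, every
connected initial graph `G₀` on `n` vertices with minimum degree `δ₀`, and every vertex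
`u`, with `T = ⌈C·n·ln n⌉`: the probability, over the trajectory of the triangulation
process started at `G₀`, that both (i) for every round `t < T` more than `δ₀/4`
vertices of `N_t¹(u)` are strongly tied to `N_t²(u)` (i.e. have at least `δ₀/2`
neighbors there), and (ii) `d_T(u) < (1 + 1/4)·δ₀`, is at most `1/n²`. -/
theorem triangulation_many_strongly_tied :
    ∃ C : ℝ, 0 < C ∧
      ∀ (V : Type) [Fintype V] [DecidableEq V] (n : ℕ), 2 ≤ n → Fintype.card V = n →
        ∀ (G0 : SimpleGraph V), G0.Connected → ∀ u : V,
          ∀ T : ℕ, T = ⌈C * n * Real.log n⌉₊ →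
            trajProb triStep G0 T (fun g =>
              (∀ t < T, (minDeg G0 : ℝ) / 4 <
                  (((Nk (g t) u 1).filter (fun v =>
                    (minDeg G0 : ℝ) / 2 ≤ (degIn (g t) v (Nk (g t) u 2) : ℝ))).card : ℝ))
              ∧ (deg (g T) u : ℝ) < (1 + 1/4) * (minDeg G0 : ℝ))
            ≤ 1 / (n : ℝ) ^ 2 := by
  refine ⟨100, by norm_num, fun V _ _ n hn hcard G0 _ u T hT => ?_⟩
  set δ := minDeg G0
  have hkn : δ / 4 + 1 ≤ n := by
    have := minDeg_le_deg G0 u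
    have := deg_le_card G0 u
    omega
  have hgrowth : ∀ G : SimpleGraph V, (deg G u : ℝ) < (1 + 1 / 4) * δ →
      deg G u < deg G0 u + (δ / 4 + 1) := fun G hG => by
    have := minDeg_le_deg G0 u
    have : 4 * deg G u < 5 * δ := by exact_mod_cast (by linarith : (4 * deg G u : ℝ) < 5 * δ)
    omega
  subst hcard
  exact (trajProb_le_of_slow_growth (f := fun G => deg G u)
    (A := fun G => (δ : ℝ) / 4 < #(stronglyTied G u δ))
    (B := fun G => (deg G u : ℝ) < (1 + 1 / 4) * δ) (k := δ / 4 + 1)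
    triStep_nonneg (fun G => (sum_triStep G).le)
    (fun G G' h => deg_mono (le_of_triStep_ne_zero h) u)
    (fun G G' h hG' => (Nat.cast_le.2 h).trans_lt hG') hgrowth
    (pow_nonneg (one_sub_one_div_nine_mul_nonneg (by omega)) _)
    (fun G hA hB => sum_triStep_deg_le_le hA hB) T).trans
    (nat_mul_one_sub_pow_le_inv_sq hn (by omega) hkn (hT ▸ Nat.le_ceil _))
end

section
/- There exists a constant C > 0 such that for every n ≥ 2 and every simple directed graph G₀ on n vertices, after T = ⌈C·n²·ln n⌉ rounds of the directed two-hop process, with probability at least 1 − 1/n the process has terminated, i.e., for every ordered pair of distinct vertices (u, v) such that G₀ contains a directed path from u to v, the directed edge (u, v) belongs to G_T. -/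
open scoped Classical

noncomputable section

variable {V : Type} [Fintype V] [DecidableEq V]

/-- The out-neighbors of `u` in the directed graph `f`. -/
def outN (f : V → V → Bool) (u : V) : Finset V := Finset.univ.filter (fun v => f u v = true)

/-- The out-degree of `u` in the directed graph `f`. -/
def outDeg (f : V → V → Bool) (u : V) : ℕ := (outN f u).card

/-- The directed graph obtained from a choice function `c` in one round of the
directed two-hop process: every vertex `u` adds the directed edge to the endpoint
`(c u).2` of its two-hop walk, provided it is not a self-loop; all additions are
simultaneous. -/
def dirNext (f : V → V → Bool) (c : V → V × V) : V → V → Bool :=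
  fun a b => f a b || (decide (a ≠ b) && decide ((c a).2 = b))

/-- The probability that in one round of the directed two-hop process on the current
directed graph `f` the vertices make exactly the choices recorded by `c`: each vertex
`u` with at least one out-neighbor independently picks a uniformly random out-neighbor
`v = (c u).1` and, if `v` has at least one out-neighbor, a uniformly random
out-neighbor `w = (c u).2` of `v`.  Vertices with no out-neighbor get the dummy choice
`(u, u)`, and a dead-end first hop `v` gets the dummy second coordinate `u` (in both
dummy cases no edge is added, as the would-be edge is a self-loop). -/
def dirWeight (f : V → V → Bool) (c : V → V × V) : ℝ :=
  ∏ u : V,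
    if outDeg f u = 0 then (if c u = (u, u) then 1 else 0)
    else if (c u).1 ∈ outN f u then
      (if outDeg f (c u).1 = 0 then
        (if (c u).2 = u then (1 : ℝ) / (outDeg f u : ℝ) else 0)
       else if (c u).2 ∈ outN f (c u).1 then
        (1 : ℝ) / ((outDeg f u : ℝ) * (outDeg f (c u).1 : ℝ)) else 0)
    else 0

/-- Transition probability of one round of the directed two-hop process. -/
def dirStep (f g : V → V → Bool) : ℝ :=
  ∑ c : V → V × V, if dirNext f c = g then dirWeight f c else 0

/-- `reaches f u v` means that the directed graph `f` contains a directed path from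
`u` to `v`. -/
def reaches (f : V → V → Bool) (u v : V) : Prop :=
  Relation.ReflTransGen (fun a b => f a b = true) u v

/-- The directed two-hop process started at `f0` has terminated in the state `f` if,
for every ordered pair of distinct vertices `(u, v)` such that `f0` contains a directed
path from `u` to `v`, the directed edge `(u, v)` belongs to `f`. -/
def terminated (f0 f : V → V → Bool) : Prop :=
  ∀ u v : V, u ≠ v → reaches f0 u v → f u v = true

/-- `distAt step g0 t` is the distribution (probability mass function) of the state at
time `t` of the Markov chain with one-step transition probabilities `step` started at
`g0`. -/
def distAt {Γ : Type} [Fintype Γ] (step : Γ → Γ → ℝ) (g0 : Γ) : ℕ → Γ → ℝ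
  | 0 => fun g => if g = g0 then 1 else 0
  | (t + 1) => fun g => ∑ h : Γ, distAt step g0 t h * step h g

end

open Finset

/-!
Let `Φ(G) = ∑ (d_G(u,v) - 1)` over the pairs with `v` reachable from `u`, where `d_G` is the
directed distance. Along a shortest path `x₀, …, x_d` from `u` to `v`, each even-indexed vertex
`x_i` picks the two-hop walk `x_{i+1}, x_{i+2}` with probability at least `1/n²`, and the
resulting shortcuts are pairwise disjoint, so in expectation `d(u,v) - 1` shrinks by the factor
`1 - 1/(2n²)`. Hence `E[Φ(G_T)] ≤ (1 - 1/(2n²))^T n³`, and since `Φ ≥ 1` as long as the process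
has not terminated, Markov's inequality bounds the failure probability by `1/n` once
`T ≥ 8 n² ln n`.
-/

section MarkovChain

variable {Γ : Type} [Fintype Γ] {step : Γ → Γ → ℝ} {g0 : Γ}

lemma distAt_nonneg (hstep : ∀ a b, 0 ≤ step a b) (t : ℕ) (g : Γ) :
    0 ≤ distAt step g0 t g := by
  induction t generalizing g with
  | zero => simp only [distAt]; positivity
  | succ t ih => exact sum_nonneg fun h _ => mul_nonneg (ih h) (hstep h g)

lemma sum_distAt_mul (t : ℕ) (F : Γ → ℝ) :
    ∑ g, distAt step g0 (t + 1) g * F g = ∑ h, distAt step g0 t h * ∑ g, step h g * F g := by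
  simp only [distAt, sum_mul, mul_sum, mul_assoc]
  exact sum_comm

lemma sum_distAt (hrow : ∀ a, ∑ b, step a b = 1) (t : ℕ) : ∑ g, distAt step g0 t g = 1 := by
  induction t with
  | zero => simp [distAt]
  | succ t ih =>
    have h := sum_distAt_mul (step := step) (g0 := g0) t fun _ => 1
    simp only [mul_one, hrow] at h
    rw [h, ih]

lemma sum_distAt_mul_le_pow_mul (hstep : ∀ a b, 0 ≤ step a b) {F : Γ → ℝ} {r : ℝ}
    (hr : 0 ≤ r) (hdrift : ∀ h, ∑ g, step h g * F g ≤ r * F h) (t : ℕ) :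
    ∑ g, distAt step g0 t g * F g ≤ r ^ t * F g0 := by
  induction t with
  | zero => simp [distAt]
  | succ t ih =>
    calc ∑ g, distAt step g0 (t + 1) g * F g
        = ∑ h, distAt step g0 t h * ∑ g, step h g * F g := sum_distAt_mul t F
      _ ≤ ∑ h, distAt step g0 t h * (r * F h) :=
        sum_le_sum fun h _ =>
          mul_le_mul_of_nonneg_left (hdrift h) (distAt_nonneg hstep t h)
      _ = r * ∑ h, distAt step g0 t h * F h := by
        rw [mul_sum]; exact sum_congr rfl fun h _ => by ring
      _ ≤ r ^ (t + 1) * F g0 := by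
        rw [pow_succ', mul_assoc]; exact mul_le_mul_of_nonneg_left ih hr

lemma of_distAt_ne_zero {S : Γ → Prop} (hS0 : S g0)
    (hS : ∀ a b, S a → step a b ≠ 0 → S b) {t : ℕ} {g : Γ} (hg : distAt step g0 t g ≠ 0) :
    S g := by
  induction t generalizing g with
  | zero =>
    simp only [distAt, ne_eq, ite_eq_right_iff, not_forall] at hg
    exact hg.1 ▸ hS0
  | succ t ih =>
    obtain ⟨h, -, hh⟩ := exists_ne_zero_of_sum_ne_zero hg
    exact hS h g (ih (left_ne_zero_of_mul hh)) (right_ne_zero_of_mul hh)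

lemma sum_trajectory_mul (F : Γ → ℝ) (T : ℕ) :
    ∑ s : Fin (T + 1) → Γ,
        (if s 0 = g0 then ∏ t : Fin T, step (s t.castSucc) (s t.succ) else 0) *
          F (s (Fin.last T)) =
      ∑ g, distAt step g0 T g * F g := by
  induction T generalizing F with
  | zero =>
    rw [← (Equiv.funUnique (Fin 1) Γ).symm.sum_comp]
    simp [distAt]
  | succ T ih =>
    rw [← (Fin.snocEquiv fun _ => Γ).sum_comp, Fintype.sum_prod_type_right]
    have h0 : (0 : Fin (T + 2)) = (0 : Fin (T + 1)).castSucc := rfl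
    simp only [Fin.snocEquiv_apply, Fin.prod_univ_castSucc, h0, Fin.succ_castSucc,
      Fin.succ_last, Fin.snoc_castSucc, Fin.snoc_last]
    rw [sum_distAt_mul, ← ih]
    refine sum_congr rfl fun s _ => ?_
    split_ifs <;> simp [mul_sum, mul_assoc]

lemma trajProb_final_eq (T : ℕ) (Q : Γ → Prop) :
    trajProb step g0 T (fun s => Q (s T)) = ∑ g, distAt step g0 T g * if Q g then 1 else 0 := by
  rw [trajProb, ← sum_trajectory_mul]
  refine sum_congr rfl fun s _ => ?_
  have hlast : (⟨min T T, Nat.lt_succ_of_le (Nat.min_le_right T T)⟩ : Fin (T + 1)) =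
      Fin.last T := Fin.ext (Nat.min_self T)
  simp only [hlast, ite_and]
  split_ifs <;> simp

theorem one_sub_pow_mul_le_trajProb (hstep : ∀ a b, 0 ≤ step a b)
    (hrow : ∀ a, ∑ b, step a b = 1) {S Q : Γ → Prop} (hS0 : S g0)
    (hS : ∀ a b, S a → step a b ≠ 0 → S b) {F : Γ → ℝ} (hF : ∀ g, 0 ≤ F g)
    (hFQ : ∀ g, S g → ¬ Q g → 1 ≤ F g) {r : ℝ} (hr : 0 ≤ r)
    (hdrift : ∀ h, ∑ g, step h g * F g ≤ r * F h) (T : ℕ) :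
    1 - r ^ T * F g0 ≤ trajProb step g0 T (fun s => Q (s T)) := by
  rw [trajProb_final_eq]
  have hsplit : ∑ g, distAt step g0 T g * (if Q g then 1 else 0) +
      ∑ g, distAt step g0 T g * (if Q g then 0 else 1) = 1 := by
    rw [← sum_add_distrib]
    refine (sum_congr rfl fun g _ => ?_).trans (sum_distAt (g0 := g0) hrow T)
    split_ifs <;> ring
  have hbad : ∑ g, distAt step g0 T g * (if Q g then 0 else 1) ≤
      ∑ g, distAt step g0 T g * F g := by
    refine sum_le_sum fun g _ => ?_
    have hd := distAt_nonneg (g0 := g0) hstep T g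
    split_ifs with hQ
    · simpa using mul_nonneg hd (hF g)
    · rcases eq_or_ne (distAt step g0 T g) 0 with h0 | h0
      · simp [h0]
      · simpa using mul_le_mul_of_nonneg_left (hFQ g (of_distAt_ne_zero hS0 hS h0) hQ) hd
  linarith [sum_distAt_mul_le_pow_mul (g0 := g0) hstep hr hdrift T]

end MarkovChain

section Walk

variable {α : Type} {r : α → α → Prop} {u v w : α} {k : ℕ}

def HasWalk (r : α → α → Prop) (u v : α) (k : ℕ) : Prop :=
  ∃ x : ℕ → α, x 0 = u ∧ x k = v ∧ ∀ i < k, r (x i) (x (i + 1))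

lemma hasWalk_zero : HasWalk r u v 0 ↔ u = v :=
  ⟨fun ⟨x, h0, hk, _⟩ => h0 ▸ hk, fun h => ⟨fun _ => v, h.symm, rfl, by simp⟩⟩

lemma HasWalk.snoc (h : HasWalk r u v k) (e : r v w) : HasWalk r u w (k + 1) := by
  obtain ⟨x, h0, hk, hx⟩ := h
  refine ⟨fun i => if i ≤ k then x i else w, by simp [h0], by simp, fun i hi => ?_⟩
  rcases Nat.lt_or_ge i k with hik | hik
  · simpa [hik.le, Nat.succ_le_of_lt hik] using hx i hik
  · obtain rfl : i = k := by omega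
    simpa [hk] using e

lemma exists_hasWalk_iff_reflTransGen :
    (∃ k, HasWalk r u v k) ↔ Relation.ReflTransGen r u v := by
  constructor
  · rintro ⟨k, hk⟩
    induction k generalizing v with
    | zero => exact hasWalk_zero.1 hk ▸ Relation.ReflTransGen.refl
    | succ k ih =>
      obtain ⟨x, h0, hk, hx⟩ := hk
      exact (ih ⟨x, h0, rfl, fun i hi => hx i (by omega)⟩).tail (hk ▸ hx k (by omega))
  · intro h
    induction h with
    | refl => exact ⟨0, hasWalk_zero.2 rfl⟩
    | tail _ e ih => obtain ⟨k, hk⟩ := ih; exact ⟨k + 1, hk.snoc e⟩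

lemma hasWalk_sub_of_eq {x : ℕ → α} (hx : ∀ i < k, r (x i) (x (i + 1))) {i j : ℕ}
    (hij : i < j) (hjk : j ≤ k) (hxij : x i = x j) : HasWalk r (x 0) (x k) (k - (j - i)) := by
  refine ⟨fun m => if m < i then x m else x (m + (j - i)), ?_, ?_, fun m hm => ?_⟩
  · dsimp only
    split_ifs with h
    · rfl
    · rw [show 0 + (j - i) = j by omega, ← hxij, show i = 0 by omega]
  · simp only [if_neg (show ¬ k - (j - i) < i by omega), show k - (j - i) + (j - i) = k by omega]
  · by_cases h1 : m + 1 < i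
    · simpa [show m < i by omega, h1] using hx m (by omega)
    · by_cases h2 : m < i
      · obtain rfl : i = m + 1 := by omega
        simpa [h2, show m + 1 + (j - (m + 1)) = j by omega, ← hxij] using hx m (by omega)
      · simpa [h1, h2, show m + 1 + (j - i) = m + (j - i) + 1 by omega]
          using hx (m + (j - i)) (by omega)

noncomputable def walkDist (r : α → α → Prop) (u v : α) : ℕ :=
  if h : ∃ k, HasWalk r u v k then Nat.find h else 0

lemma walkDist_of_not_reflTransGen (h : ¬ Relation.ReflTransGen r u v) : walkDist r u v = 0 := by
  rw [walkDist, dif_neg (mt exists_hasWalk_iff_reflTransGen.1 h)]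

lemma walkDist_le (h : HasWalk r u v k) : walkDist r u v ≤ k := by
  rw [walkDist, dif_pos ⟨k, h⟩]
  exact Nat.find_le h

lemma exists_shortest_walk (h : Relation.ReflTransGen r u v) :
    ∃ x : ℕ → α, x 0 = u ∧ x (walkDist r u v) = v ∧
      (∀ i < walkDist r u v, r (x i) (x (i + 1))) ∧
      Set.InjOn x (range (walkDist r u v + 1)) := by
  have hex := exists_hasWalk_iff_reflTransGen.2 h
  obtain ⟨x, h0, hd, hx⟩ : HasWalk r u v (walkDist r u v) := by
    rw [walkDist, dif_pos hex]; exact Nat.find_spec hex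
  refine ⟨x, h0, hd, hx, fun i hi j hj hxij => ?_⟩
  simp only [coe_range, Set.mem_Iio] at hi hj
  by_contra hne
  rcases Nat.lt_or_gt_of_ne hne with hlt | hlt
  · have := walkDist_le (h0 ▸ hd ▸ hasWalk_sub_of_eq hx hlt (by omega) hxij)
    omega
  · have := walkDist_le (h0 ▸ hd ▸ hasWalk_sub_of_eq hx hlt (by omega) hxij.symm)
    omega

lemma walkDist_lt_card [Fintype α] (h : Relation.ReflTransGen r u v) :
    walkDist r u v < Fintype.card α := by
  obtain ⟨x, -, -, -, hinj⟩ := exists_shortest_walk h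
  simpa using card_le_card_of_injOn x (fun _ _ => mem_univ _) hinj

lemma two_le_walkDist (h : Relation.ReflTransGen r u v) (hne : u ≠ v) (huv : ¬ r u v) :
    2 ≤ walkDist r u v := by
  obtain ⟨x, h0, hd, hx, -⟩ := exists_shortest_walk h
  by_contra hlt
  interval_cases hk : walkDist r u v
  · exact hne (h0 ▸ hd)
  · exact huv (h0 ▸ hd ▸ hx 0 one_pos)

noncomputable def evenShortcuts (r : α → α → Prop) (x : ℕ → α) (d : ℕ) : Finset ℕ :=
  {i ∈ range (d - 1) | Even i ∧ r (x i) (x (i + 2))}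

lemma card_evenShortcuts_le (r : α → α → Prop) (x : ℕ → α) (d : ℕ) :
    (evenShortcuts r x d).card ≤ d - 1 :=
  (card_filter_le _ _).trans (card_range _).le

/-- Shortcuts at even positions never overlap, so each of them saves one step. -/
lemma hasWalk_sub_card_evenShortcuts {x : ℕ → α} {d : ℕ}
    (hx : ∀ i < d, r (x i) (x (i + 1))) :
    HasWalk r (x 0) (x d) (d - (evenShortcuts r x d).card) := by
  induction d using Nat.strong_induction_on with
  | _ d ih =>
  rcases d with _ | _ | d
  · simpa [evenShortcuts] using hasWalk_zero.2 rfl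
  · simpa [evenShortcuts] using (hasWalk_zero.2 rfl).snoc (hx 0 one_pos)
  · have hsucc : ∀ m, evenShortcuts r x (m + 2) = if Even m ∧ r (x m) (x (m + 2))
        then insert m (evenShortcuts r x (m + 1)) else evenShortcuts r x (m + 1) := fun m => by
      simp only [evenShortcuts, Nat.add_sub_cancel, Nat.add_succ_sub_one, range_add_one,
        filter_insert]
    by_cases hsc : Even d ∧ r (x d) (x (d + 2))
    · have hodd : (evenShortcuts r x (d + 1)).card = (evenShortcuts r x d).card := by
        rcases d with _ | m
        · rfl
        · rw [hsucc, if_neg fun h => Nat.not_even_iff_odd.2 h.1.add_one hsc.1]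
      rw [hsucc, if_pos hsc, card_insert_of_notMem (by simp [evenShortcuts])]
      convert (ih d (by omega) fun i hi => hx i (by omega)).snoc hsc.2 using 1
      have := card_evenShortcuts_le r x d
      omega
    · rw [hsucc, if_neg hsc]
      convert (ih (d + 1) (by omega) fun i hi => hx i (by omega)).snoc (hx (d + 1) (by omega))
        using 1
      have := card_evenShortcuts_le r x (d + 1)
      omega

lemma card_filter_even_range (m : ℕ) : #{i ∈ range m | Even i} = (m + 1) / 2 := by
  induction m with
  | zero => simp
  | succ m ih =>
    rw [range_add_one, filter_insert]
    split_ifs with h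
    · rw [card_insert_of_notMem (by simp), ih]
      rcases h with ⟨k, rfl⟩
      omega
    · rw [ih]
      rcases Nat.not_even_iff_odd.1 h with ⟨k, rfl⟩
      omega

end Walk

section NextGraph

variable {V : Type} [DecidableEq V]

lemma dirNext_of_edge {f : V → V → Bool} (c : V → V × V) {a b : V}
    (h : f a b = true) : dirNext f c a b = true := by
  simp [dirNext, h]

lemma dirNext_of_choice (f : V → V → Bool) {c : V → V × V} {a b : V}
    (hne : a ≠ b) (h : (c a).2 = b) : dirNext f c a b = true := by
  simp [dirNext, hne, h]

lemma walkDist_dirNext_sub_one_le {f : V → V → Bool} {x : ℕ → V} {d : ℕ}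
    (hx : ∀ i < d, f (x i) (x (i + 1)) = true) (hinj : Set.InjOn x (range (d + 1)))
    (c : V → V × V) :
    ((walkDist (fun a b => dirNext f c a b = true) (x 0) (x d) - 1 : ℕ) : ℝ) ≤
      ((d - 1 : ℕ) : ℝ) -
        #{i ∈ range (d - 1) | Even i ∧ c (x i) = (x (i + 1), x (i + 2))} := by
  set K := #{i ∈ range (d - 1) | Even i ∧ c (x i) = (x (i + 1), x (i + 2))}
  have hK : K ≤ (evenShortcuts (fun a b => dirNext f c a b = true) x d).card := by
    refine card_le_card fun i hi => ?_
    simp only [evenShortcuts, mem_filter, mem_range] at hi ⊢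
    refine ⟨hi.1, hi.2.1, dirNext_of_choice f (fun h => ?_) (by rw [hi.2.2])⟩
    have := hinj (by simp; omega) (by simp; omega) h
    omega
  have hshort := card_evenShortcuts_le (fun a b => dirNext f c a b = true) x d
  have hdist := walkDist_le (hasWalk_sub_card_evenShortcuts (r := fun a b => dirNext f c a b = true)
    fun i hi => dirNext_of_edge c (hx i hi))
  rw [← Nat.cast_sub (by omega)]
  exact_mod_cast (by omega)

end NextGraph

section TwoHop

variable {V : Type} [Fintype V]

lemma mem_outN {f : V → V → Bool} {u v : V} : v ∈ outN f u ↔ f u v = true := by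
  simp [outN]

lemma outDeg_le_card (f : V → V → Bool) (u : V) : outDeg f u ≤ Fintype.card V :=
  card_le_univ _

/-- Truncated subtraction drops the pairs at distance at most one, and through the junk value
`walkDist = 0` also the pairs that are not connected. -/
noncomputable def distPotential (f : V → V → Bool) : ℕ :=
  ∑ u, ∑ v, (walkDist (fun a b => f a b = true) u v - 1)

lemma distPotential_le (f : V → V → Bool) :
    distPotential f ≤ Fintype.card V ^ 3 := by
  calc distPotential f ≤ ∑ _u : V, ∑ _v : V, Fintype.card V :=
        sum_le_sum fun u _ => sum_le_sum fun v _ => by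
          by_cases h : reaches f u v
          · have := walkDist_lt_card h
            omega
          · simp [walkDist_of_not_reflTransGen h]
    _ = Fintype.card V ^ 3 := by simp [sum_const, card_univ]; ring

lemma one_le_distPotential {f0 g : V → V → Bool}
    (hle : ∀ a b, f0 a b = true → g a b = true) (h : ¬ terminated f0 g) :
    1 ≤ distPotential g := by
  simp only [terminated, not_forall, Bool.not_eq_true] at h
  obtain ⟨u, v, hne, hr, hg⟩ := h
  have h2 := two_le_walkDist (Relation.ReflTransGen.mono hle _ _ hr) hne (by simp [hg])
  calc 1 ≤ walkDist (fun a b => g a b = true) u v - 1 := by omega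
    _ ≤ ∑ v', (walkDist (fun a b => g a b = true) u v' - 1) :=
        single_le_sum (f := fun v' => walkDist (fun a b => g a b = true) u v' - 1)
          (fun _ _ => Nat.zero_le _) (mem_univ v)
    _ ≤ distPotential g :=
        single_le_sum (f := fun u' => ∑ v', (walkDist (fun a b => g a b = true) u' v' - 1))
          (fun _ _ => Nat.zero_le _) (mem_univ u)

variable [DecidableEq V]

noncomputable def choiceWeight (f : V → V → Bool) (u : V) (p : V × V) : ℝ :=
  if outDeg f u = 0 then (if p = (u, u) then 1 else 0)
  else if p.1 ∈ outN f u then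
    (if outDeg f p.1 = 0 then
      (if p.2 = u then (1 : ℝ) / (outDeg f u : ℝ) else 0)
     else if p.2 ∈ outN f p.1 then
      (1 : ℝ) / ((outDeg f u : ℝ) * (outDeg f p.1 : ℝ)) else 0)
  else 0

lemma dirWeight_eq_prod (f : V → V → Bool) (c : V → V × V) :
    dirWeight f c = ∏ u, choiceWeight f u (c u) := rfl

lemma choiceWeight_nonneg (f : V → V → Bool) (u : V) (p : V × V) :
    0 ≤ choiceWeight f u p := by
  unfold choiceWeight; split_ifs <;> positivity

lemma sum_choiceWeight (f : V → V → Bool) (u : V) : ∑ p, choiceWeight f u p = 1 := by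
  unfold choiceWeight
  split_ifs with hu
  · simp
  · rw [Fintype.sum_prod_type]
    have hdu : (outDeg f u : ℝ) ≠ 0 := by exact_mod_cast hu
    have hsum_mem : ∀ v (a : ℝ), ∑ w, (if w ∈ outN f v then a else 0) = outDeg f v * a :=
      fun v a => by simp [outDeg]
    have hinner : ∀ v, (∑ w, if v ∈ outN f u then
        (if outDeg f v = 0 then (if w = u then (1 : ℝ) / outDeg f u else 0)
         else if w ∈ outN f v then (1 : ℝ) / (outDeg f u * outDeg f v) else 0) else 0) =
        if v ∈ outN f u then (1 : ℝ) / outDeg f u else 0 := fun v => by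
      split_ifs with hv hv0
      · simp
      · have hdv : (outDeg f v : ℝ) ≠ 0 := by exact_mod_cast hv0
        rw [hsum_mem]
        field_simp
      · simp
    rw [Fintype.sum_congr _ _ hinner, hsum_mem]
    field_simp

lemma dirWeight_nonneg (f : V → V → Bool) (c : V → V × V) : 0 ≤ dirWeight f c :=
  prod_nonneg fun u _ => choiceWeight_nonneg f u (c u)

lemma sum_dirWeight (f : V → V → Bool) : ∑ c, dirWeight f c = 1 := by
  simp only [dirWeight_eq_prod, ← Fintype.prod_sum, sum_choiceWeight, prod_const_one]

lemma sum_dirWeight_mul_ite_eq (f : V → V → Bool) (a : V) (p : V × V) :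
    ∑ c, dirWeight f c * (if c a = p then 1 else 0) = choiceWeight f a p := by
  have hfactor : ∀ c : V → V × V, dirWeight f c * (if c a = p then 1 else 0) =
      ∏ u, choiceWeight f u (c u) * (if u = a then (if c u = p then 1 else 0) else 1) := by
    intro c
    rw [prod_mul_distrib, prod_ite_eq' univ a, if_pos (mem_univ a),
      dirWeight_eq_prod]
  simp only [hfactor]
  rw [← Fintype.prod_sum fun u q =>
    choiceWeight f u q * if u = a then (if q = p then 1 else 0) else 1]
  rw [prod_eq_single a (fun u _ hu => by simp [hu, sum_choiceWeight]) (by simp)]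
  simp

lemma one_div_card_sq_le_choiceWeight {f : V → V → Bool} {u v w : V} (huv : f u v = true)
    (hvw : f v w = true) : 1 / (Fintype.card V : ℝ) ^ 2 ≤ choiceWeight f u (v, w) := by
  have hu : 0 < outDeg f u := card_pos.2 ⟨v, mem_outN.2 huv⟩
  have hv : 0 < outDeg f v := card_pos.2 ⟨w, mem_outN.2 hvw⟩
  rw [choiceWeight, if_neg hu.ne', if_pos (mem_outN.2 huv), if_neg hv.ne', if_pos (mem_outN.2 hvw),
    sq]
  gcongr
  · exact_mod_cast outDeg_le_card f u
  · exact_mod_cast outDeg_le_card f v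

lemma choiceWeight_ne_zero {f : V → V → Bool} {u : V} {p : V × V}
    (h : choiceWeight f u p ≠ 0) :
    p.2 = u ∨ f u p.1 = true ∧ f p.1 p.2 = true := by
  unfold choiceWeight at h
  split_ifs at h <;> simp_all [mem_outN]

lemma sum_dirStep_mul (f : V → V → Bool) (F : (V → V → Bool) → ℝ) :
    ∑ g, dirStep f g * F g = ∑ c, dirWeight f c * F (dirNext f c) := by
  simp only [dirStep, sum_mul, ite_mul, zero_mul]
  rw [sum_comm]
  simp

lemma sum_dirStep (f : V → V → Bool) : ∑ g, dirStep f g = 1 := by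
  simpa [sum_dirWeight] using sum_dirStep_mul f 1

lemma dirStep_nonneg (f g : V → V → Bool) : 0 ≤ dirStep f g :=
  sum_nonneg fun c _ => by split_ifs; exacts [dirWeight_nonneg f c, le_rfl]

lemma le_of_dirStep_ne_zero {f g : V → V → Bool} (h : dirStep f g ≠ 0) {a b : V}
    (hab : f a b = true) : g a b = true := by
  obtain ⟨c, -, hc⟩ := exists_ne_zero_of_sum_ne_zero h
  rw [← (ite_ne_right_iff.1 hc).1]
  exact dirNext_of_edge c hab

lemma reaches_of_dirNext {f : V → V → Bool} {c : V → V × V} (hc : dirWeight f c ≠ 0)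
    {a b : V} (h : dirNext f c a b = true) : reaches f a b := by
  simp only [dirNext, Bool.or_eq_true, Bool.and_eq_true, decide_eq_true_eq] at h
  rcases h with h | ⟨hne, rfl⟩
  · exact .single h
  · have ha : choiceWeight f a (c a) ≠ 0 := fun h0 => hc (prod_eq_zero (mem_univ a) h0)
    rcases choiceWeight_ne_zero ha with h | ⟨h1, h2⟩
    · exact absurd h.symm hne
    · exact Relation.ReflTransGen.tail (b := (c a).1) (.single h1) h2

lemma le_sum_dirWeight_mul_card {f : V → V → Bool} {x : ℕ → V} {d : ℕ}
    (hx : ∀ i < d, f (x i) (x (i + 1)) = true) :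
    ((d - 1 : ℕ) : ℝ) / (2 * (Fintype.card V : ℝ) ^ 2) ≤
      ∑ c, dirWeight f c *
        (#{i ∈ range (d - 1) | Even i ∧ c (x i) = (x (i + 1), x (i + 2))} : ℝ) := by
  set E := {i ∈ range (d - 1) | Even i}
  have hE : ∀ c : V → V × V,
      #{i ∈ range (d - 1) | Even i ∧ c (x i) = (x (i + 1), x (i + 2))} =
        #{i ∈ E | c (x i) = (x (i + 1), x (i + 2))} := fun c => by
    rw [filter_filter]
  calc ((d - 1 : ℕ) : ℝ) / (2 * (Fintype.card V : ℝ) ^ 2)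
      ≤ #E * (1 / (Fintype.card V : ℝ) ^ 2) := by
        rw [card_filter_even_range, mul_one_div, ← div_div]
        gcongr
        rw [div_le_iff₀ two_pos]
        exact_mod_cast (by omega : d - 1 ≤ (d - 1 + 1) / 2 * 2)
    _ ≤ ∑ i ∈ E, choiceWeight f (x i) (x (i + 1), x (i + 2)) := by
        rw [← nsmul_eq_mul, ← sum_const]
        refine sum_le_sum fun i hi => ?_
        simp only [E, mem_filter, mem_range] at hi
        exact one_div_card_sq_le_choiceWeight (hx i (by omega)) (hx (i + 1) (by omega))
    _ = ∑ c, dirWeight f c * (#{i ∈ E | c (x i) = (x (i + 1), x (i + 2))} : ℝ) := by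
        simp only [natCast_card_filter, mul_sum]
        rw [sum_comm]
        exact sum_congr rfl fun i _ => (sum_dirWeight_mul_ite_eq f _ _).symm
    _ = _ := by simp only [hE]

lemma sum_dirWeight_mul_walkDist_sub_one_le (f : V → V → Bool) (u v : V) :
    ∑ c, dirWeight f c * ((walkDist (fun a b => dirNext f c a b = true) u v - 1 : ℕ) : ℝ) ≤
      (1 - 1 / (2 * (Fintype.card V : ℝ) ^ 2)) *
        ((walkDist (fun a b => f a b = true) u v - 1 : ℕ) : ℝ) := by
  by_cases hr : reaches f u v
  · obtain ⟨x, rfl, hxd, hx, hinj⟩ := exists_shortest_walk hr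
    generalize walkDist (fun a b => f a b = true) (x 0) v = d at hxd hx hinj ⊢
    subst hxd
    calc ∑ c, dirWeight f c *
          ((walkDist (fun a b => dirNext f c a b = true) (x 0) (x d) - 1 : ℕ) : ℝ)
        ≤ ∑ c, dirWeight f c * (((d - 1 : ℕ) : ℝ) -
            #{i ∈ range (d - 1) | Even i ∧ c (x i) = (x (i + 1), x (i + 2))}) :=
          sum_le_sum fun c _ => mul_le_mul_of_nonneg_left
            (walkDist_dirNext_sub_one_le hx hinj c) (dirWeight_nonneg f c)
      _ = ((d - 1 : ℕ) : ℝ) - ∑ c, dirWeight f c *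
            (#{i ∈ range (d - 1) | Even i ∧ c (x i) = (x (i + 1), x (i + 2))} : ℝ) := by
          simp only [mul_sub, sum_sub_distrib, ← sum_mul, sum_dirWeight, one_mul]
      _ ≤ ((d - 1 : ℕ) : ℝ) - ((d - 1 : ℕ) : ℝ) / (2 * (Fintype.card V : ℝ) ^ 2) := by
          linarith [le_sum_dirWeight_mul_card (f := f) hx]
      _ = _ := by ring
  · have hzero : ∀ c, dirWeight f c *
        ((walkDist (fun a b => dirNext f c a b = true) u v - 1 : ℕ) : ℝ) = 0 := fun c => by
      rcases eq_or_ne (dirWeight f c) 0 with h0 | h0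
      · rw [h0, zero_mul]
      · refine mul_eq_zero_of_right _ ?_
        rw [walkDist_of_not_reflTransGen (r := fun a b => dirNext f c a b = true) fun h =>
          hr (Relation.ReflTransGen.lift' id (fun _ _ => reaches_of_dirNext h0) _ _ h)]
        simp
    simp [hzero, walkDist_of_not_reflTransGen hr]

lemma sum_dirStep_mul_distPotential_le (f : V → V → Bool) :
    ∑ g, dirStep f g * (distPotential g : ℝ) ≤
      (1 - 1 / (2 * (Fintype.card V : ℝ) ^ 2)) * distPotential f := by
  rw [sum_dirStep_mul]
  simp only [distPotential, Nat.cast_sum, mul_sum]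
  rw [sum_comm]
  refine sum_le_sum fun u _ => ?_
  rw [sum_comm]
  exact sum_le_sum fun v _ => sum_dirWeight_mul_walkDist_sub_one_le f u v

end TwoHop

lemma one_div_two_mul_sq_le_one {x : ℝ} (hx : 1 ≤ x) : 1 / (2 * x ^ 2) ≤ 1 := by
  rw [div_le_one (by positivity)]
  nlinarith

lemma one_sub_pow_mul_cube_le {n T : ℕ} (hn : 1 ≤ n)
    (hT : 8 * (n : ℝ) ^ 2 * Real.log n ≤ T) :
    (1 - 1 / (2 * (n : ℝ) ^ 2)) ^ T * (n : ℝ) ^ 3 ≤ 1 / n := by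
  have hn' : (1 : ℝ) ≤ n := by exact_mod_cast hn
  set ε := 1 / (2 * (n : ℝ) ^ 2)
  have hε : ε ≤ 1 := one_div_two_mul_sq_le_one hn'
  have hεT : 4 * Real.log n ≤ ε * T := by
    rw [div_mul_eq_mul_div, one_mul, le_div_iff₀ (by positivity)]
    linarith
  have hpow : (1 - ε) ^ T ≤ 1 / (n : ℝ) ^ 4 :=
    calc (1 - ε) ^ T ≤ Real.exp (-ε) ^ T :=
          pow_le_pow_left₀ (by linarith) (by linarith [Real.add_one_le_exp (-ε)]) T
      _ = Real.exp (-(ε * T)) := by rw [← Real.exp_nat_mul]; ring_nf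
      _ ≤ Real.exp (-Real.log ((n : ℝ) ^ 4)) :=
          Real.exp_le_exp.2 (by rw [Real.log_pow]; push_cast; linarith)
      _ = 1 / (n : ℝ) ^ 4 := by rw [Real.exp_neg, Real.exp_log (by positivity), one_div]
  calc (1 - ε) ^ T * (n : ℝ) ^ 3 ≤ 1 / (n : ℝ) ^ 4 * (n : ℝ) ^ 3 := by gcongr
    _ = 1 / (n : ℝ) := by field_simp

/-- There is a constant `C > 0` such that for every `n ≥ 2` and every
simple directed graph `G₀` (no self-loops) on `n` vertices, after `T = ⌈C·n²·ln n⌉`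
rounds of the directed two-hop process, with probability at least `1 − 1/n` the process
has terminated: for every ordered pair of distinct vertices `(u, v)` such that `G₀`
contains a directed path from `u` to `v`, the directed edge `(u, v)` belongs to
`G_T`. -/
theorem directed_twoHop_upper_bound :
    ∃ C : ℝ, 0 < C ∧
      ∀ (V : Type) [Fintype V] [DecidableEq V] (n : ℕ), 2 ≤ n → Fintype.card V = n →
        ∀ f0 : V → V → Bool, (∀ v, f0 v v = false) →
          ∀ T : ℕ, T = ⌈C * n ^ 2 * Real.log n⌉₊ →
            1 - 1 / (n : ℝ) ≤
              trajProb dirStep f0 T (fun g => terminated f0 (g T)) := by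
  refine ⟨8, by norm_num, fun V _ _ n hn hcard f0 _ T hT => ?_⟩
  have hdrift := sum_dirStep_mul_distPotential_le (V := V)
  rw [hcard] at hdrift
  have hr : (0 : ℝ) ≤ 1 - 1 / (2 * (n : ℝ) ^ 2) :=
    sub_nonneg.2 (one_div_two_mul_sq_le_one (by exact_mod_cast (by omega : 1 ≤ n)))
  have hpot : (distPotential f0 : ℝ) ≤ (n : ℝ) ^ 3 := by
    exact_mod_cast hcard ▸ distPotential_le f0
  have hT' : 8 * (n : ℝ) ^ 2 * Real.log n ≤ T := hT ▸ Nat.le_ceil _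
  calc 1 - 1 / (n : ℝ)
      ≤ 1 - (1 - 1 / (2 * (n : ℝ) ^ 2)) ^ T * (n : ℝ) ^ 3 := by
        linarith [one_sub_pow_mul_cube_le (by omega) hT']
    _ ≤ 1 - (1 - 1 / (2 * (n : ℝ) ^ 2)) ^ T * distPotential f0 := by
        gcongr
    _ ≤ trajProb dirStep f0 T (fun g => terminated f0 (g T)) :=
        one_sub_pow_mul_le_trajProb dirStep_nonneg sum_dirStep
          (S := fun g => ∀ a b, f0 a b = true → g a b = true) (fun _ _ h => h)
          (fun _ _ hS hstep a b h => le_of_dirStep_ne_zero hstep (hS a b h))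
          (fun _ => Nat.cast_nonneg _) (fun _ hS hQ => by exact_mod_cast one_le_distPotential hS hQ)
          hr hdrift T
end

section
/- Let G be a finite simple graph on vertex set V, and suppose that for each vertex w of V there is given a set e_w of at most one unordered pair of distinct neighbors of w in G. Let G' be the graph on V whose edge set is the edge set of G together with all the pairs e_w. Then for every vertex u, the degree of u in G' is at most twice the degree of u in G. -/
open scoped Classical

section

open SimpleGraph

variable {V : Type} [Fintype V] [DecidableEq V]

theorem nbr_sup (G H : SimpleGraph V) (u : V) : nbr (G ⊔ H) u = nbr G u ∪ nbr H u := by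
  ext v
  simp [nbr]

theorem deg_sup_le (G H : SimpleGraph V) (u : V) : deg (G ⊔ H) u ≤ deg G u + deg H u := by
  rw [deg, nbr_sup]
  exact Finset.card_union_le _ _

/-- Each neighbour `v` is charged to some `w` with `e w = s(u, v)`; as `e w` determines `v`,
no `w` is charged twice. -/
theorem deg_fromEdgeSet_le_card {W : Type} (e : W → Option (Sym2 V)) (u : V) (s : Finset W)
    (hs : ∀ w p, e w = some p → u ∈ p → w ∈ s) :
    deg (fromEdgeSet {p | ∃ w, e w = some p}) u ≤ s.card := by
  have witness : ∀ v ∈ nbr (fromEdgeSet {p | ∃ w, e w = some p}) u,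
      ∃ w ∈ s, e w = some s(u, v) := by
    intro v hv
    simp only [nbr, Finset.mem_filter, Finset.mem_univ, true_and, fromEdgeSet_adj,
      Set.mem_ofPred_eq] at hv
    obtain ⟨⟨w, hw⟩, -⟩ := hv
    exact ⟨w, hs w _ hw (Sym2.mem_mk_left u v), hw⟩
  refine Finset.card_le_card_of_forall_subsingleton (fun v w => e w = some s(u, v)) witness ?_
  rintro w - v₁ ⟨-, h₁⟩ v₂ ⟨-, h₂⟩
  exact Sym2.congr_right.mp (Option.some.inj (h₁.symm.trans h₂))

end

/-- Let `G` be a finite simple graph on a vertex set `V` and suppose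
that for each vertex `w` there is given a set `e w` of at most one unordered pair of
distinct neighbors of `w` in `G` (realized as an `Option (Sym2 V)`).  Let `G'` be the
graph on `V` whose edge set is that of `G` together with all the pairs `e w`.  Then the
degree of every vertex in `G'` is at most twice its degree in `G`.  (This captures one
round of the triangulation process.) -/
theorem degree_after_one_round_le_two_mul
    {V : Type} [Fintype V] [DecidableEq V] (G : SimpleGraph V)
    (e : V → Option (Sym2 V))
    (he : ∀ w p, e w = some p → ¬ p.IsDiag ∧ ∀ a ∈ p, G.Adj w a)
    (G' : SimpleGraph V)
    (hG' : G' = G ⊔ SimpleGraph.fromEdgeSet {p | ∃ w, e w = some p})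
    (u : V) :
    deg G' u ≤ 2 * deg G u := by
  have witnesses_adj : ∀ w p, e w = some p → u ∈ p → w ∈ nbr G u := fun w p hw hu => by
    simpa [nbr] using ((he w p hw).2 u hu).symm
  subst hG'
  calc deg (G ⊔ SimpleGraph.fromEdgeSet {p | ∃ w, e w = some p}) u
      ≤ deg G u + deg (SimpleGraph.fromEdgeSet {p | ∃ w, e w = some p}) u := deg_sup_le _ _ u
    _ ≤ deg G u + deg G u := Nat.add_le_add_left (deg_fromEdgeSet_le_card e u _ witnesses_adj) _
    _ = 2 * deg G u := (two_mul _).symm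
end

section
/- Let G be a finite simple graph on n ≥ 2 vertices, let δ₀ > 0 be a real number, and let u and v be distinct vertices with d(u) ≤ (1 + 1/8)·δ₀, d(u) ≥ 1, and such that v has at least δ₀/4 neighbors in N¹(u). Then ∑_{w ∈ N¹(u) ∩ N¹(v)} 1/(d(u)·d(w)) ≥ 2/(9n). (This sum is the probability that, in one round of the two-hop walk process, the vertex u selects a random neighbor w and then w's random neighbor is v, i.e., that u connects to v in a single round.) -/
open scoped Classical

/-- Let `G` be a finite simple graph on `n ≥ 2` vertices, `δ₀ > 0` a
real number, and `u ≠ v` vertices with `d(u) ≤ (1 + 1/8)·δ₀`, `d(u) ≥ 1`, such that `v`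
has at least `δ₀/4` neighbors in `N¹(u)`.  Then
`∑_{w ∈ N¹(u) ∩ N¹(v)} 1/(d(u)·d(w)) ≥ 2/(9n)`; this sum is the probability that, in
one round of the two-hop walk process, `u` connects to `v` in a single round. -/
theorem twoHop_single_round_connect_prob
    {V : Type} [Fintype V] [DecidableEq V] (G : SimpleGraph V)
    (n : ℕ) (hn2 : 2 ≤ n) (hn : Fintype.card V = n)
    (δ₀ : ℝ) (hδ₀ : 0 < δ₀) (u v : V) (huv : u ≠ v)
    (hdu : (deg G u : ℝ) ≤ (1 + 1/8) * δ₀) (hdu1 : 1 ≤ deg G u)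
    (hv : δ₀ / 4 ≤ (degIn G v (nbr G u) : ℝ)) :
    2 / (9 * n) ≤ ∑ w ∈ nbr G u ∩ nbr G v, 1 / ((deg G u : ℝ) * (deg G w : ℝ)) := by
  classical
  have hn0 : 0 < (n:ℝ) := by positivity
  have hdu0 : 0 < (deg G u : ℝ) := by exact_mod_cast hdu1
  have key : ∀ w ∈ nbr G u ∩ nbr G v,
      1/((deg G u:ℝ)*n) ≤ 1/((deg G u:ℝ)*(deg G w:ℝ)) := by
    intro w hw
    have hwu : G.Adj u w := by
      have := Finset.mem_inter.mp hw
      simpa [nbr] using this.1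
    have hw1 : 1 ≤ deg G w := by
      have : u ∈ nbr G w := by simpa [nbr] using hwu.symm
      exact Finset.card_pos.mpr ⟨u, this⟩
    have hwn : (deg G w : ℝ) ≤ n := by
      have : deg G w ≤ n := hn ▸ Finset.card_le_univ _
      exact_mod_cast this
    have hw0 : 0 < (deg G w : ℝ) := by exact_mod_cast hw1
    apply one_div_le_one_div_of_le
    · positivity
    · exact mul_le_mul_of_nonneg_left hwn (le_of_lt hdu0)
  have h1 : ((nbr G u ∩ nbr G v).card : ℝ) * (1/((deg G u:ℝ)*n)) ≤
      ∑ w ∈ nbr G u ∩ nbr G v, 1 / ((deg G u : ℝ) * (deg G w : ℝ)) := by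
    simpa using Finset.card_nsmul_le_sum _ _ _ key
  have hcard : (δ₀/4 : ℝ) ≤ ((nbr G u ∩ nbr G v).card : ℝ) := by
    rw [Finset.inter_comm]
    simpa [degIn] using hv
  have h2 : 2 / (9 * (n:ℝ)) ≤ (δ₀/4) * (1/((deg G u:ℝ)*n)) := by
    rw [mul_one_div, div_le_div_iff₀ (by positivity) (by positivity)]
    nlinarith [mul_pos hdu0 hn0]
  have h3 : (δ₀/4) * (1/((deg G u:ℝ)*n)) ≤ ((nbr G u ∩ nbr G v).card : ℝ) * (1/((deg G u:ℝ)*n)) :=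
    mul_le_mul_of_nonneg_right hcard (by positivity)
  linarith
end

section
/- Let G be a finite simple graph on n vertices, let δ₀ > 0 be a real number, and let u, v be vertices with d(u) < (1 + 1/8)·δ₀. Let w be a neighbor of u such that d(w, N²(u)) < δ₀/2 and such that w has at least δ₀/4 neighbors in N¹(u) \ N¹(v). Then d(w, N¹(u) \ N¹(v)) / d(w)² ≥ 2/(13n), and in particular this quantity is greater than 1/(7n). (This quantity is the probability that, when w selects an ordered pair of its neighbors uniformly at random with replacement, the first coordinate is v and the second lies in N¹(u) \ N¹(v), i.e., that v gets connected through w to a neighbor of u not already adjacent to v in one triangulation step.) -/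
open scoped Classical

/-- Let `G` be a finite simple graph on `n` vertices, `δ₀ > 0` a real
number, and `u, v` vertices with `d(u) < (1 + 1/8)·δ₀`.  Let `w` be a neighbor of `u`
with `d(w, N²(u)) < δ₀/2` (i.e. `w` is weakly tied to `N²(u)`) having at least `δ₀/4`
neighbors in `N¹(u) \ N¹(v)`.  Then `d(w, N¹(u) \ N¹(v)) / d(w)² ≥ 2/(13n)`, and in
particular this quantity is greater than `1/(7n)`; it is the probability that `v` gets
connected through `w` to a neighbor of `u` not already adjacent to `v` in one
triangulation step. -/
theorem weakly_tied_connect_new_neighbor_prob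
    {V : Type} [Fintype V] [DecidableEq V] (G : SimpleGraph V)
    (n : ℕ) (hn : Fintype.card V = n)
    (δ₀ : ℝ) (hδ₀ : 0 < δ₀) (u v : V)
    (hdu : (deg G u : ℝ) < (1 + 1/8) * δ₀)
    (w : V) (hw : w ∈ nbr G u)
    (hweak : (degIn G w (Nk G u 2) : ℝ) < δ₀ / 2)
    (hmany : δ₀ / 4 ≤ (degIn G w (nbr G u \ nbr G v) : ℝ)) :
    2 / (13 * n) ≤ (degIn G w (nbr G u \ nbr G v) : ℝ) / (deg G w : ℝ) ^ 2 ∧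
      1 / (7 * n) < (degIn G w (nbr G u \ nbr G v) : ℝ) / (deg G w : ℝ) ^ 2 := by

  have hwu : G.Adj u w := by simpa [nbr] using hw
  -- degree of w positive
  have hDpos : 0 < deg G w := by
    refine Finset.card_pos.mpr ⟨u, ?_⟩
    simp [nbr, hwu.symm]
  -- degree of w at most n
  have hDn : deg G w ≤ n := by
    rw [← hn, ← Finset.card_univ]; exact Finset.card_le_card (Finset.subset_univ _)
  -- key covering bound : deg w ≤ deg u + degIn w (N²(u))
  have hcover : nbr G w ⊆ (nbr G u \ {w}) ∪ {u} ∪ (nbr G w ∩ Nk G u 2) := by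
    intro x hx
    have hadj : G.Adj w x := by simpa [nbr] using hx
    by_cases hxu : x = u
    · simp [hxu]
    by_cases hxnu : G.Adj u x
    · have hxw : x ≠ w := fun h => (h ▸ hadj).ne rfl
      simp [nbr, hxnu, hxw, hxu]
    · -- x is at distance exactly 2 from u
      have hle : G.dist u x ≤ 2 := by
        have := SimpleGraph.dist_le ((hwu.toWalk).append hadj.toWalk)
        simpa using this
      have hne0 : G.dist u x ≠ 0 := by
        rw [SimpleGraph.dist_ne_zero_iff_ne_and_reachable]
        exact ⟨Ne.symm hxu, ⟨(hwu.toWalk).append hadj.toWalk⟩⟩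
      have hne1 : G.dist u x ≠ 1 := fun h =>
        hxnu (SimpleGraph.dist_eq_one_iff_adj.mp h)
      have h2 : G.dist u x = 2 := by omega
      simp [nbr, Nk, hadj, hxu, h2]
  have hDb : deg G w ≤ deg G u + degIn G w (Nk G u 2) := by
    have h1 := Finset.card_le_card hcover
    have h2 : ((nbr G u \ {w}) ∪ {u} ∪ (nbr G w ∩ Nk G u 2)).card ≤
        (nbr G u \ {w}).card + 1 + (nbr G w ∩ Nk G u 2).card := by
      calc ((nbr G u \ {w}) ∪ {u} ∪ (nbr G w ∩ Nk G u 2)).card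
          ≤ ((nbr G u \ {w}) ∪ {u}).card + (nbr G w ∩ Nk G u 2).card :=
            Finset.card_union_le _ _
        _ ≤ (nbr G u \ {w}).card + 1 + (nbr G w ∩ Nk G u 2).card := by
            have h := Finset.card_union_le (nbr G u \ {w}) ({u} : Finset V)
            simp only [Finset.card_singleton] at h
            omega
    have h3 : (nbr G u \ {w}).card + 1 ≤ (nbr G u).card := by
      have hwmem : w ∈ nbr G u := hw
      have := Finset.card_sdiff_add_card_eq_card (Finset.singleton_subset_iff.mpr hwmem)
      simp at this
      omega
    unfold deg degIn
    omega
  -- real versions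
  set D : ℝ := (deg G w : ℝ) with hD
  set S : ℝ := (degIn G w (nbr G u \ nbr G v) : ℝ) with hS
  have hDpos' : (0:ℝ) < D := by rw [hD]; exact_mod_cast hDpos
  have hDn' : D ≤ (n:ℝ) := by rw [hD]; exact_mod_cast hDn
  have hnpos : (0:ℝ) < (n:ℝ) := lt_of_lt_of_le hDpos' hDn'
  have hDlt : D < 13/8 * δ₀ := by
    have hb : D ≤ (deg G u : ℝ) + (degIn G w (Nk G u 2) : ℝ) := by rw [hD]; exact_mod_cast hDb
    linarith
  have main : 2 / (13 * n) ≤ S / D ^ 2 := by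
    rw [div_le_div_iff₀ (by positivity) (by positivity)]
    nlinarith [mul_le_mul_of_nonneg_left hDn' (le_of_lt (show (0:ℝ) < S by linarith)),
      mul_lt_mul_of_pos_left hDlt hDpos', mul_le_mul_of_nonneg_right hmany hDpos'.le]
  refine ⟨main, lt_of_lt_of_le ?_ main⟩
  rw [div_lt_div_iff₀ (by positivity) (by positivity)]
  linarith
end
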